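/- arXiv:1801.04178 — 5 statements merged into one kernel-verified Lean document; each statement's English description precedes it below -/
import Mathlib

section
/- Fix an integer n ≥ 1. The action of the fake Casimir element Ω on V ⊗ V is equal to σ + β*∘β, where β*∘β is the operator sending u ⊗ w to β(u ⊗ w)·β*(1); that is, for all standard basis vectors u, w of V, Ω·(u ⊗ w) = (−1)^{ū·w̄} w ⊗ u + β(u ⊗ w)·Σ_{i=1}^n (v_i ⊗ v_{i'} − v_{i'} ⊗ v_i). -/
open scoped TensorProduct

/-- Row/column index set `{1,…,n} ∪ {1',…,n'}` for `2n × 2n` matrices: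
`.inl i` is the unprimed index `i`, `.inr i` the primed index `i'`. -/
abbrev PIdx (n : ℕ) := Fin n ⊕ Fin n

/-- The space `M_{2n}(ℂ)` of `2n × 2n` complex matrices. -/
abbrev PMat (n : ℕ) := Matrix (PIdx n) (PIdx n) ℂ

/-- Matrix units `E_{rs}`. -/
noncomputable def Eu (n : ℕ) (r s : PIdx n) : PMat n := Matrix.single r s 1

/-- `A⁻_{ij} = E_{ij} − E_{j'i'}`. -/
noncomputable def Am (n : ℕ) (i j : Fin n) : PMat n :=
  Eu n (.inl i) (.inl j) - Eu n (.inr j) (.inr i)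

/-- `A⁺_{ij} = E_{ij} + E_{j'i'}`. -/
noncomputable def Ap (n : ℕ) (i j : Fin n) : PMat n :=
  Eu n (.inl i) (.inl j) + Eu n (.inr j) (.inr i)

/-- `B⁺_{ij} = E_{ij'} + E_{ji'}`. -/
noncomputable def Bp (n : ℕ) (i j : Fin n) : PMat n :=
  Eu n (.inl i) (.inr j) + Eu n (.inl j) (.inr i)

/-- `B⁻_{ij} = E_{ij'} − E_{ji'}`. -/
noncomputable def Bm (n : ℕ) (i j : Fin n) : PMat n :=
  Eu n (.inl i) (.inr j) - Eu n (.inl j) (.inr i)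

/-- `C⁺_{ij} = E_{i'j} + E_{j'i}`. -/
noncomputable def Cp (n : ℕ) (i j : Fin n) : PMat n :=
  Eu n (.inr i) (.inl j) + Eu n (.inr j) (.inl i)

/-- `C⁻_{ij} = E_{i'j} − E_{j'i}`. -/
noncomputable def Cm (n : ℕ) (i j : Fin n) : PMat n :=
  Eu n (.inr i) (.inl j) - Eu n (.inr j) (.inl i)

/-- The periplectic Lie superalgebra `p(n) ⊆ M_{2n}(ℂ)`, i.e. all block matrices
`(A B; C −Aᵀ)` with `Bᵀ = B` and `Cᵀ = −C`, as a `ℂ`-subspace of `M_{2n}(ℂ)`. -/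
noncomputable def pAlg (n : ℕ) : Submodule ℂ (PMat n) where
  carrier := {x | (∀ i j, x (.inr i) (.inr j) = -x (.inl j) (.inl i)) ∧
                  (∀ i j, x (.inl i) (.inr j) = x (.inl j) (.inr i)) ∧
                  (∀ i j, x (.inr i) (.inl j) = -x (.inr j) (.inl i))}
  add_mem' := by
    rintro x y ⟨hx1, hx2, hx3⟩ ⟨hy1, hy2, hy3⟩
    refine ⟨fun i j => ?_, fun i j => ?_, fun i j => ?_⟩ <;>
      simp only [Matrix.add_apply, hx1 i j, hx2 i j, hx3 i j, hy1 i j, hy2 i j, hy3 i j] <;>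
      ring
  zero_mem' := by
    refine ⟨fun i j => ?_, fun i j => ?_, fun i j => ?_⟩ <;> simp
  smul_mem' := by
    rintro c x ⟨hx1, hx2, hx3⟩
    refine ⟨fun i j => ?_, fun i j => ?_, fun i j => ?_⟩ <;>
      simp only [Matrix.smul_apply, hx1 i j, hx2 i j, hx3 i j, smul_eq_mul] <;> ring

/-- Index set for the basis `𝒳` of `p(n)`: pairs `(i,j)` for the `A⁻_{ij}`,
pairs `i ≤ j` for the `B⁺_{ij}`, and pairs `i < j` for the `C⁻_{ij}`. -/
abbrev PBIdx (n : ℕ) :=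
  (Fin n × Fin n) ⊕ ({p : Fin n × Fin n // p.1 ≤ p.2} ⊕ {p : Fin n × Fin n // p.1 < p.2})

/-- The family `𝒳 = {A⁻_{ij}} ∪ {B⁺_{ij} : i ≤ j} ∪ {C⁻_{ij} : i < j}`. -/
noncomputable def Xfam (n : ℕ) : PBIdx n → PMat n
  | .inl p => Am n p.1 p.2
  | .inr (.inl p) => Bp n p.1.1 p.1.2
  | .inr (.inr p) => Cm n p.1.1 p.1.2

/-- The vector representation `V = ℂ^{n|n}`. -/
abbrev Vsp (n : ℕ) := PIdx n → ℂ

/-- The standard basis vector `v_r` of `V`. -/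
noncomputable def sv (n : ℕ) (r : PIdx n) : Vsp n := Pi.single r 1

/-- The parity of a standard basis vector: `v_i` is even, `v_{i'}` is odd. -/
def par {n : ℕ} : PIdx n → ℕ := Sum.elim (fun _ => 0) (fun _ => 1)

/-- The odd bilinear form `β` on `V`. -/
noncomputable def bForm (n : ℕ) (u w : Vsp n) : ℂ :=
  ∑ i : Fin n, (u (.inl i) * w (.inr i) + u (.inr i) * w (.inl i))

/-- The action of a summand `x ⊗ z` of `Ω`, with `x, z` homogeneous of parity `p`, on the
basis tensor `v_r ⊗ v_s`: `(x ⊗ z)(v_r ⊗ v_s) = (−1)^{p·par r} (x v_r) ⊗ (z v_s)`. -/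
noncomputable def tensAct (n : ℕ) (p : ℕ) (x z : PMat n) (r s : PIdx n) :
    Vsp n ⊗[ℂ] Vsp n :=
  ((-1 : ℂ) ^ (p * par r)) • (x.mulVec (sv n r) ⊗ₜ[ℂ] z.mulVec (sv n s))

/-- The action of the fake Casimir
`Ω = Σ_{i,j} A⁻_{ij} ⊗ A⁺_{ji} − ½ Σ_i B⁺_{ii} ⊗ C⁺_{ii} − Σ_{i<j} B⁺_{ij} ⊗ C⁺_{ji}
+ Σ_{i<j} C⁻_{ij} ⊗ B⁻_{ji}` on the basis tensor `v_r ⊗ v_s` of `V ⊗ V`. -/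
noncomputable def OmegaAct (n : ℕ) (r s : PIdx n) : Vsp n ⊗[ℂ] Vsp n :=
  (∑ i : Fin n, ∑ j : Fin n, tensAct n 0 (Am n i j) (Ap n j i) r s)
    - (1 / 2 : ℂ) • (∑ i : Fin n, tensAct n 1 (Bp n i i) (Cp n i i) r s)
    - (∑ i : Fin n, ∑ j : Fin n, if i < j then tensAct n 1 (Bp n i j) (Cp n j i) r s else 0)
    + (∑ i : Fin n, ∑ j : Fin n, if i < j then tensAct n 1 (Cm n i j) (Bm n j i) r s else 0)

/-!
Every summand `x ⊗ z` of `Ω` sends a basis tensor to a signed sum of basis tensors, so `Ω` can be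
evaluated on `v_r ⊗ v_s` by collapsing Kronecker deltas. The only obstacle is the restriction
`i < j`: the terms `B⁺_{ij} ⊗ C⁺_{ji}` and `C⁻_{ij} ⊗ B⁻_{ji}` are symmetric in `(i, j)` (the
second as a product of two antisymmetric factors, with vanishing diagonal), so together with the
`½`-weighted diagonal they add up to `½` of the unrestricted sums over all `(i, j)`.
-/

open Matrix TensorProduct

theorem Finset.two_nsmul_sum_sum_ite_lt_add_sum_diag {ι M : Type*} [Fintype ι] [LinearOrder ι]
    [AddCommMonoid M] (f : ι → ι → M) (hf : ∀ i j, f i j = f j i) :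
    2 • (∑ i, ∑ j, if i < j then f i j else 0) + ∑ i, f i i = ∑ i, ∑ j, f i j := by
  have hsplit : ∀ i j, f i j = (if i < j then f i j else 0) + (if j < i then f j i else 0)
      + (if i = j then f i j else 0) := by
    intro i j
    rcases lt_trichotomy i j with h | rfl | h
    · simp [h, h.asymm, h.ne]
    · simp
    · simp [h, h.asymm, h.ne', hf i j]
  conv_rhs => rw [Finset.sum_congr rfl fun i _ => Finset.sum_congr rfl fun j _ => hsplit i j]
  simp only [Finset.sum_add_distrib, Finset.sum_ite_eq, Finset.mem_univ, if_true]
  rw [Finset.sum_comm (f := fun i j => if j < i then f j i else 0), two_nsmul]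

lemma Eu_mulVec_sv (n : ℕ) (a b c : PIdx n) :
    Eu n a b *ᵥ sv n c = if b = c then sv n a else 0 := by
  rw [Eu, sv, single_mulVec_eq]
  split_ifs with h <;> simp [h, sv]

lemma Bp_swap (n : ℕ) (i j : Fin n) : Bp n j i = Bp n i j := add_comm _ _

lemma Cp_swap (n : ℕ) (i j : Fin n) : Cp n j i = Cp n i j := add_comm _ _

lemma Bm_swap (n : ℕ) (i j : Fin n) : Bm n j i = -Bm n i j := (neg_sub _ _).symm

lemma Cm_swap (n : ℕ) (i j : Fin n) : Cm n j i = -Cm n i j := (neg_sub _ _).symm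

lemma Cm_self (n : ℕ) (i : Fin n) : Cm n i i = 0 := sub_self _

lemma tensAct_neg_neg (n p : ℕ) (x z : PMat n) (r s : PIdx n) :
    tensAct n p (-x) (-z) r s = tensAct n p x z r s := by
  simp [tensAct, neg_mulVec, neg_tmul, tmul_neg]

lemma tensAct_zero_left (n p : ℕ) (z : PMat n) (r s : PIdx n) : tensAct n p 0 z r s = 0 := by
  simp [tensAct]

lemma omegaAct_eq_sum_sum (n : ℕ) (r s : PIdx n) :
    OmegaAct n r s =
      ∑ i, ∑ j, tensAct n 0 (Am n i j) (Ap n j i) r s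
        - (1 / 2 : ℂ) • ∑ i, ∑ j, tensAct n 1 (Bp n i j) (Cp n j i) r s
        + (1 / 2 : ℂ) • ∑ i, ∑ j, tensAct n 1 (Cm n i j) (Bm n j i) r s := by
  have hB := Finset.two_nsmul_sum_sum_ite_lt_add_sum_diag
    (fun i j => tensAct n 1 (Bp n i j) (Cp n j i) r s) fun i j => by
      rw [Bp_swap n j i, Cp_swap n i j]
  have hC := Finset.two_nsmul_sum_sum_ite_lt_add_sum_diag
    (fun i j => tensAct n 1 (Cm n i j) (Bm n j i) r s) fun i j => by
      rw [Cm_swap n j i, Bm_swap n i j, tensAct_neg_neg]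
  simp only [Cm_self, tensAct_zero_left, Finset.sum_const_zero, add_zero] at hC
  rw [OmegaAct, ← hB, ← hC]
  module

noncomputable def betaStarOne (n : ℕ) : Vsp n ⊗[ℂ] Vsp n :=
  ∑ i : Fin n, (sv n (.inl i) ⊗ₜ[ℂ] sv n (.inr i) - sv n (.inr i) ⊗ₜ[ℂ] sv n (.inl i))

section OmegaOnBasis

attribute [local simp] tensAct par Am Ap Bp Cp Bm Cm sub_mulVec add_mulVec Eu_mulVec_sv
  sub_tmul tmul_sub add_tmul tmul_add ite_tmul tmul_ite neg_tmul tmul_neg neg_ite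
  Finset.sum_add_distrib Finset.sum_sub_distrib betaStarOne

variable (n : ℕ) (k l : Fin n)

lemma omegaAct_inl_inl :
    OmegaAct n (.inl k) (.inl l) = sv n (.inl l) ⊗ₜ[ℂ] sv n (.inl k) := by
  rw [omegaAct_eq_sum_sum]
  simp

lemma omegaAct_inr_inr :
    OmegaAct n (.inr k) (.inr l) = -(sv n (.inr l) ⊗ₜ[ℂ] sv n (.inr k)) := by
  rw [omegaAct_eq_sum_sum]
  simp

lemma omegaAct_inl_inr :
    OmegaAct n (.inl k) (.inr l) =
      sv n (.inr l) ⊗ₜ[ℂ] sv n (.inl k) + if k = l then betaStarOne n else 0 := by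
  rw [omegaAct_eq_sum_sum]
  obtain rfl | hkl := eq_or_ne k l
  · simp
    module
  · simp [hkl, hkl.symm]
    module

lemma omegaAct_inr_inl :
    OmegaAct n (.inr k) (.inl l) =
      sv n (.inl l) ⊗ₜ[ℂ] sv n (.inr k) + if k = l then betaStarOne n else 0 := by
  rw [omegaAct_eq_sum_sum]
  obtain rfl | hkl := eq_or_ne k l
  · simp
    module
  · simp [hkl, hkl.symm]
    module

end OmegaOnBasis

lemma bForm_sv (n : ℕ) (r s : PIdx n) :
    bForm n (sv n r) (sv n s) = if r.swap = s then 1 else 0 := by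
  rcases r with k | k <;> rcases s with l | l <;> simp [bForm, sv, Pi.single_apply, eq_comm]

theorem statement3_general (n : ℕ) (r s : PIdx n) :
    OmegaAct n r s =
      ((-1 : ℂ) ^ (par r * par s)) • (sv n s ⊗ₜ[ℂ] sv n r) +
        bForm n (sv n r) (sv n s) •
          ∑ i : Fin n, (sv n (.inl i) ⊗ₜ[ℂ] sv n (.inr i) - sv n (.inr i) ⊗ₜ[ℂ] sv n (.inl i)) := by
  change _ = _ + _ • betaStarOne n
  rcases r with k | k <;> rcases s with l | l
  · simp [omegaAct_inl_inl, par, bForm_sv]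
  · simp [omegaAct_inl_inr, par, bForm_sv]
  · simp [omegaAct_inr_inl, par, bForm_sv]
  · rw [omegaAct_inr_inr]
    simp only [par, Sum.elim_inr, mul_one, pow_one, bForm_sv, Sum.swap_inr, reduceCtorEq,
      ↓reduceIte, zero_smul, add_zero]
    -- `simp` does not match `neg_one_smul` against the tensor product's own `SMul` instance
    exact (neg_one_smul ℂ _).symm

/-- the action of `Ω` on `V ⊗ V` equals `σ + β*∘β`; on basis vectors,
`Ω·(v_r ⊗ v_s) = (−1)^{par r · par s} v_s ⊗ v_r + β(v_r ⊗ v_s)·Σᵢ(vᵢ ⊗ v_{i'} − v_{i'} ⊗ vᵢ)`. -/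
theorem statement3 (n : ℕ) (hn : 1 ≤ n) (r s : PIdx n) :
    OmegaAct n r s =
      ((-1 : ℂ) ^ (par r * par s)) • (sv n s ⊗ₜ[ℂ] sv n r) +
        bForm n (sv n r) (sv n s) •
          ∑ i : Fin n, (sv n (.inl i) ⊗ₜ[ℂ] sv n (.inr i) - sv n (.inr i) ⊗ₜ[ℂ] sv n (.inl i)) :=
  statement3_general n r s
end

section
/- Fix an integer a ≥ 2, a commutative ℂ-algebra R, and ħ ∈ R. Let B be the R-algebra presented by generators s_1,…,s_{a−1}, e_1,…,e_{a−1}, y_1,…,y_a subject only to relations (VW1)–(VW5), (VW7), and (VW9) (i.e. omitting the idempotent relations (VW6) and the unwrapping relations (VW8)). Then (VW6) and (VW8) hold automatically in B: e_i² = 0 for all 1 ≤ i ≤ a−1, and e_1 y_1^k e_1 = 0 for all k ≥ 1. -/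
/-!
From `e s = e` and `s e = -e` we get `e² = e s e = -e²`, so `e² = 0` since `2` is invertible.
For the unwrapping relations put `e = e_i`, `s = s_i`, `y = y_i`, `z = y_{i+1}` and show
`e z^j y^m e = 0` by induction on `j + m`. Modulo words of lower degree, which vanish by induction,
(VW9) moves a `z` to the right end of `e z^j y^m e` where it becomes a `y`, and (VW7) moves `s`
to the right through a `y`, turning it into a `z`. Hence
`e y^n e = e s y^n e ≡ e z^n s e = -e z^n e ≡ -e y^n e`, and again `2` is invertible.
-/

/-- Generators of the (affine) VW superalgebra on `a` strands:
`s i`, `e i` for `i : Fin (a-1)` (0-based, so `s i` is the paper's `s_{i+1}`),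
and `y j` for `j : Fin a` (0-based, so `y j` is the paper's `y_{j+1}`). -/
inductive VWGen (a : ℕ) : Type
  | s : Fin (a - 1) → VWGen a
  | e : Fin (a - 1) → VWGen a
  | y : Fin a → VWGen a

/-- The generator `s_i` inside the free algebra. -/
noncomputable def Sf (a : ℕ) (R : Type) [CommRing R] (i : Fin (a - 1)) :
    FreeAlgebra R (VWGen a) := FreeAlgebra.ι R (VWGen.s i)

/-- The generator `e_i` inside the free algebra. -/
noncomputable def Ef (a : ℕ) (R : Type) [CommRing R] (i : Fin (a - 1)) :
    FreeAlgebra R (VWGen a) := FreeAlgebra.ι R (VWGen.e i)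

/-- The generator `y_j` inside the free algebra. -/
noncomputable def Yf (a : ℕ) (R : Type) [CommRing R] (j : Fin a) :
    FreeAlgebra R (VWGen a) := FreeAlgebra.ι R (VWGen.y j)

/-- The scalar `hb` inside the free algebra. -/
noncomputable def Hf (a : ℕ) (R : Type) [CommRing R] (hb : R) :
    FreeAlgebra R (VWGen a) := algebraMap R (FreeAlgebra R (VWGen a)) hb

/-- The defining relations (VW1)-(VW5), (VW7), (VW9) — i.e. omitting the idempotent
relations (VW6) and the unwrapping relations (VW8) — with 0-based indices. -/
inductive VWRelNo68 (a : ℕ) (R : Type) [CommRing R] (hb : R) :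
    FreeAlgebra R (VWGen a) → FreeAlgebra R (VWGen a) → Prop
  -- (VW1)
  | vw1 (i : Fin (a - 1)) : VWRelNo68 a R hb (Sf a R i * Sf a R i) 1
  -- (VW2)
  | vw2a (i j : Fin (a - 1)) (h : (i : ℕ) + 1 < j ∨ (j : ℕ) + 1 < i) :
      VWRelNo68 a R hb (Sf a R i * Ef a R j) (Ef a R j * Sf a R i)
  | vw2b (i j : Fin (a - 1)) (h : (i : ℕ) + 1 < j ∨ (j : ℕ) + 1 < i) :
      VWRelNo68 a R hb (Ef a R i * Ef a R j) (Ef a R j * Ef a R i)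
  | vw2c (i : Fin (a - 1)) (j : Fin a) (h1 : (j : ℕ) ≠ i) (h2 : (j : ℕ) ≠ (i : ℕ) + 1) :
      VWRelNo68 a R hb (Ef a R i * Yf a R j) (Yf a R j * Ef a R i)
  | vw2d (i j : Fin a) : VWRelNo68 a R hb (Yf a R i * Yf a R j) (Yf a R j * Yf a R i)
  -- (VW3)
  | vw3a (i j : Fin (a - 1)) (h : (i : ℕ) + 1 < j ∨ (j : ℕ) + 1 < i) :
      VWRelNo68 a R hb (Sf a R i * Sf a R j) (Sf a R j * Sf a R i)
  | vw3b (i : ℕ) (h1 : i < a - 1) (h2 : i + 1 < a - 1) :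
      VWRelNo68 a R hb (Sf a R ⟨i, h1⟩ * Sf a R ⟨i + 1, h2⟩ * Sf a R ⟨i, h1⟩)
        (Sf a R ⟨i + 1, h2⟩ * Sf a R ⟨i, h1⟩ * Sf a R ⟨i + 1, h2⟩)
  | vw3c (i : Fin (a - 1)) (j : Fin a) (h1 : (j : ℕ) ≠ i) (h2 : (j : ℕ) ≠ (i : ℕ) + 1) :
      VWRelNo68 a R hb (Sf a R i * Yf a R j) (Yf a R j * Sf a R i)
  -- (VW4)
  | vw4a (i : ℕ) (h1 : i < a - 1) (h2 : i + 1 < a - 1) :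
      VWRelNo68 a R hb (Ef a R ⟨i + 1, h2⟩ * Ef a R ⟨i, h1⟩ * Ef a R ⟨i + 1, h2⟩) (-Ef a R ⟨i + 1, h2⟩)
  | vw4b (i : ℕ) (h1 : i < a - 1) (h2 : i + 1 < a - 1) :
      VWRelNo68 a R hb (Ef a R ⟨i, h1⟩ * Ef a R ⟨i + 1, h2⟩ * Ef a R ⟨i, h1⟩) (-Ef a R ⟨i, h1⟩)
  -- (VW5)
  | vw5a (i : Fin (a - 1)) : VWRelNo68 a R hb (Ef a R i * Sf a R i) (Ef a R i)
  | vw5b (i : Fin (a - 1)) : VWRelNo68 a R hb (Sf a R i * Ef a R i) (-Ef a R i)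
  | vw5c (i : ℕ) (h1 : i < a - 1) (h2 : i + 1 < a - 1) :
      VWRelNo68 a R hb (Sf a R ⟨i, h1⟩ * Ef a R ⟨i + 1, h2⟩ * Ef a R ⟨i, h1⟩)
        (Sf a R ⟨i + 1, h2⟩ * Ef a R ⟨i, h1⟩)
  | vw5d (i : ℕ) (h1 : i < a - 1) (h2 : i + 1 < a - 1) :
      VWRelNo68 a R hb (Sf a R ⟨i + 1, h2⟩ * Ef a R ⟨i, h1⟩ * Ef a R ⟨i + 1, h2⟩)
        (-(Sf a R ⟨i, h1⟩ * Ef a R ⟨i + 1, h2⟩))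
  | vw5e (i : ℕ) (h1 : i < a - 1) (h2 : i + 1 < a - 1) :
      VWRelNo68 a R hb (Ef a R ⟨i + 1, h2⟩ * Ef a R ⟨i, h1⟩ * Sf a R ⟨i + 1, h2⟩)
        (Ef a R ⟨i + 1, h2⟩ * Sf a R ⟨i, h1⟩)
  | vw5f (i : ℕ) (h1 : i < a - 1) (h2 : i + 1 < a - 1) :
      VWRelNo68 a R hb (Ef a R ⟨i, h1⟩ * Ef a R ⟨i + 1, h2⟩ * Sf a R ⟨i, h1⟩)
        (-(Ef a R ⟨i, h1⟩ * Sf a R ⟨i + 1, h2⟩))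
  -- (VW7)
  | vw7a (i : ℕ) (h1 : i < a - 1) (hy : i < a) (hy2 : i + 1 < a) :
      VWRelNo68 a R hb (Sf a R ⟨i, h1⟩ * Yf a R ⟨i, hy⟩ - Yf a R ⟨i + 1, hy2⟩ * Sf a R ⟨i, h1⟩)
        (-(Hf a R hb * Ef a R ⟨i, h1⟩) - Hf a R hb)
  | vw7b (i : ℕ) (h1 : i < a - 1) (hy : i < a) (hy2 : i + 1 < a) :
      VWRelNo68 a R hb (Yf a R ⟨i, hy⟩ * Sf a R ⟨i, h1⟩ - Sf a R ⟨i, h1⟩ * Yf a R ⟨i + 1, hy2⟩)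
        (Hf a R hb * Ef a R ⟨i, h1⟩ - Hf a R hb)
  -- (VW9)
  | vw9a (i : ℕ) (h1 : i < a - 1) (hy : i < a) (hy2 : i + 1 < a) :
      VWRelNo68 a R hb (Ef a R ⟨i, h1⟩ * (Yf a R ⟨i + 1, hy2⟩ - Yf a R ⟨i, hy⟩))
        (Hf a R hb * Ef a R ⟨i, h1⟩)
  | vw9b (i : ℕ) (h1 : i < a - 1) (hy : i < a) (hy2 : i + 1 < a) :
      VWRelNo68 a R hb ((Yf a R ⟨i + 1, hy2⟩ - Yf a R ⟨i, hy⟩) * Ef a R ⟨i, h1⟩)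
        (-(Hf a R hb * Ef a R ⟨i, h1⟩))


/-- The algebra presented by generators `s_i, e_i, y_j` subject only to
(VW1)-(VW5), (VW7) and (VW9). -/
noncomputable abbrev VWB (a : ℕ) (R : Type) [CommRing R] (hb : R) : Type :=
  RingQuot (VWRelNo68 a R hb)

/-- The image of the generator `s_i` in `B`. -/
noncomputable def sgB (a : ℕ) (R : Type) [CommRing R] (hb : R) (i : Fin (a - 1)) : VWB a R hb :=
  RingQuot.mkAlgHom R (VWRelNo68 a R hb) (Sf a R i)

/-- The image of the generator `e_i` in `B`. -/
noncomputable def egB (a : ℕ) (R : Type) [CommRing R] (hb : R) (i : Fin (a - 1)) : VWB a R hb :=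
  RingQuot.mkAlgHom R (VWRelNo68 a R hb) (Ef a R i)

/-- The image of the generator `y_j` in `B`. -/
noncomputable def ygB (a : ℕ) (R : Type) [CommRing R] (hb : R) (j : Fin a) : VWB a R hb :=
  RingQuot.mkAlgHom R (VWRelNo68 a R hb) (Yf a R j)

section Unwrapping

variable {R B : Type*} [CommRing R] [Ring B] [Algebra R B] {e s y z : B} {c : R}

theorem mul_self_eq_neg_mul_self (hes : e * s = e) (hse : s * e = -e) : e * e = -(e * e) :=
  calc e * e = e * s * e := by rw [hes]
    _ = -(e * e) := by rw [mul_assoc, hse, mul_neg]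

theorem mul_pow_succ_mul_pow_mul (hze : z * e = y * e - c • e) (hzy : Commute z y) {j m : ℕ}
    (hjm : e * z ^ j * y ^ m * e = 0) :
    e * z ^ (j + 1) * y ^ m * e = e * z ^ j * y ^ (m + 1) * e :=
  calc e * z ^ (j + 1) * y ^ m * e = e * z ^ j * y ^ m * (z * e) := by
        simp only [pow_succ, mul_assoc, (hzy.pow_right m).eq]
    _ = e * z ^ j * y ^ (m + 1) * e - c • (e * z ^ j * y ^ m * e) := by
        rw [hze, pow_succ]; simp only [mul_sub, mul_smul_comm, mul_assoc]
    _ = e * z ^ j * y ^ (m + 1) * e := by rw [hjm, smul_zero, sub_zero]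

theorem mul_pow_mul_mul_pow_succ_mul (hsy : s * y = z * s - c • e - algebraMap R B c) {j m : ℕ}
    (hj : e * z ^ j * e = 0) (hjm : e * z ^ j * y ^ m * e = 0) :
    e * z ^ j * s * y ^ (m + 1) * e = e * z ^ (j + 1) * s * y ^ m * e :=
  calc e * z ^ j * s * y ^ (m + 1) * e = e * z ^ j * (s * y) * y ^ m * e := by
        simp only [pow_succ', mul_assoc]
    _ = e * z ^ (j + 1) * s * y ^ m * e - c • (e * z ^ j * e * y ^ m * e)
          - c • (e * z ^ j * y ^ m * e) := by
        rw [hsy, Algebra.algebraMap_eq_smul_one, pow_succ]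
        simp only [mul_sub, sub_mul, mul_smul_comm, smul_mul_assoc, mul_one, mul_assoc]
    _ = e * z ^ (j + 1) * s * y ^ m * e := by rw [hj, hjm]; simp

theorem mul_pow_mul_pow_mul_eq_mul_pow_mul (hze : z * e = y * e - c • e) (hzy : Commute z y)
    {n : ℕ} (hlow : ∀ j m, j + m ≤ n → e * z ^ j * y ^ m * e = 0) {j m : ℕ} (hjm : j + m = n + 1) :
    e * z ^ j * y ^ m * e = e * y ^ (n + 1) * e := by
  induction j generalizing m with
  | zero =>
    obtain rfl : m = n + 1 := by omega
    rw [pow_zero, mul_one]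
  | succ j ih => rw [mul_pow_succ_mul_pow_mul hze hzy (hlow j m (by omega)), ih (by omega)]

theorem mul_pow_mul_mul_pow_mul_eq_mul_pow_mul_mul
    (hsy : s * y = z * s - c • e - algebraMap R B c)
    {n : ℕ} (hlow : ∀ j m, j + m ≤ n → e * z ^ j * y ^ m * e = 0) {j m : ℕ} (hjm : j + m = n + 1) :
    e * z ^ j * s * y ^ m * e = e * z ^ (n + 1) * s * e := by
  induction m generalizing j with
  | zero =>
    obtain rfl : j = n + 1 := by omega
    rw [pow_zero, mul_one]
  | succ m ih =>
    have hj : e * z ^ j * e = 0 := by simpa using hlow j 0 (by omega)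
    rw [mul_pow_mul_mul_pow_succ_mul hsy hj (hlow j m (by omega)), ih (by omega)]

theorem mul_pow_mul_pow_mul_eq_zero [IsAddTorsionFree B] (hes : e * s = e) (hse : s * e = -e)
    (hze : z * e = y * e - c • e) (hzy : Commute z y)
    (hsy : s * y = z * s - c • e - algebraMap R B c) (j m : ℕ) :
    e * z ^ j * y ^ m * e = 0 := by
  suffices h : ∀ n j m, j + m ≤ n → e * z ^ j * y ^ m * e = 0 from h _ j m le_rfl
  intro n
  induction n with
  | zero =>
    intro j m hjm
    obtain ⟨rfl, rfl⟩ : j = 0 ∧ m = 0 := by omega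
    simpa using self_eq_neg.mp (mul_self_eq_neg_mul_self hes hse)
  | succ n ih =>
    have hy : e * y ^ (n + 1) * e = -(e * y ^ (n + 1) * e) :=
      calc e * y ^ (n + 1) * e = e * z ^ 0 * s * y ^ (n + 1) * e := by rw [pow_zero, mul_one, hes]
        _ = e * z ^ (n + 1) * s * e := mul_pow_mul_mul_pow_mul_eq_mul_pow_mul_mul hsy ih (by omega)
        _ = -(e * z ^ (n + 1) * e) := by rw [mul_assoc _ s, hse, mul_neg]
        _ = -(e * y ^ (n + 1) * e) := by
          rw [← mul_pow_mul_pow_mul_eq_mul_pow_mul hze hzy ih (m := 0) rfl, pow_zero, mul_one]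
    intro j m hjm
    rcases hjm.lt_or_eq with hlt | heq
    · exact ih j m (by omega)
    · rw [mul_pow_mul_pow_mul_eq_mul_pow_mul hze hzy ih heq]
      exact self_eq_neg.mp hy

end Unwrapping

section VWB

variable (a : ℕ) (R : Type) [CommRing R] (hb : R)

theorem egB_mul_sgB (i : Fin (a - 1)) : egB a R hb i * sgB a R hb i = egB a R hb i := by
  simpa only [egB, sgB, map_mul] using RingQuot.mkAlgHom_rel R (VWRelNo68.vw5a (hb := hb) i)

theorem sgB_mul_egB (i : Fin (a - 1)) : sgB a R hb i * egB a R hb i = -egB a R hb i := by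
  simpa only [egB, sgB, map_mul, map_neg] using
    RingQuot.mkAlgHom_rel R (VWRelNo68.vw5b (hb := hb) i)

theorem commute_ygB (i j : Fin a) : Commute (ygB a R hb i) (ygB a R hb j) := by
  simpa only [ygB, map_mul, Commute, SemiconjBy] using
    RingQuot.mkAlgHom_rel R (VWRelNo68.vw2d (hb := hb) i j)

theorem mkAlgHom_Hf : RingQuot.mkAlgHom R (VWRelNo68 a R hb) (Hf a R hb) = algebraMap R _ hb :=
  AlgHom.commutes _ hb

theorem ygB_succ_mul_egB (i : ℕ) (h : i + 1 < a) :
    ygB a R hb ⟨i + 1, h⟩ * egB a R hb ⟨i, by omega⟩ =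
      ygB a R hb ⟨i, by omega⟩ * egB a R hb ⟨i, by omega⟩ - hb • egB a R hb ⟨i, by omega⟩ := by
  have := RingQuot.mkAlgHom_rel R (VWRelNo68.vw9b (hb := hb) i (by omega) (by omega) h)
  simp only [map_mul, map_sub, map_neg, mkAlgHom_Hf, ← Algebra.smul_def, sub_mul,
    sub_eq_iff_eq_add] at this
  simp only [ygB, egB, this]
  abel

theorem sgB_mul_ygB (i : ℕ) (h : i + 1 < a) :
    sgB a R hb ⟨i, by omega⟩ * ygB a R hb ⟨i, by omega⟩ =
      ygB a R hb ⟨i + 1, h⟩ * sgB a R hb ⟨i, by omega⟩ - hb • egB a R hb ⟨i, by omega⟩ -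
        algebraMap R _ hb := by
  have := RingQuot.mkAlgHom_rel R (VWRelNo68.vw7a (hb := hb) i (by omega) (by omega) h)
  simp only [map_mul, map_sub, map_neg, mkAlgHom_Hf, ← Algebra.smul_def,
    sub_eq_iff_eq_add] at this
  simp only [sgB, ygB, egB, this]
  abel

variable [Algebra ℂ R]

instance : IsAddTorsionFree (VWB a R hb) := .of_isTorsionFree ℂ _

theorem egB_mul_self (i : Fin (a - 1)) : egB a R hb i * egB a R hb i = 0 :=
  self_eq_neg.mp (mul_self_eq_neg_mul_self (egB_mul_sgB a R hb i) (sgB_mul_egB a R hb i))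

theorem egB_mul_ygB_pow_mul_egB (i : ℕ) (h : i + 1 < a) (k : ℕ) :
    egB a R hb ⟨i, by omega⟩ * ygB a R hb ⟨i, by omega⟩ ^ k * egB a R hb ⟨i, by omega⟩ = 0 := by
  simpa only [pow_zero, mul_one] using
    mul_pow_mul_pow_mul_eq_zero (egB_mul_sgB a R hb _) (sgB_mul_egB a R hb _)
      (ygB_succ_mul_egB a R hb i h) (commute_ygB a R hb _ _) (sgB_mul_ygB a R hb i h) 0 k

end VWB

/-- in the algebra presented by (VW1)-(VW5), (VW7), (VW9) only (omitting
(VW6) and (VW8)), the relations (VW6) `e_i² = 0` and (VW8) `e_1 y_1^k e_1 = 0` (k ≥ 1)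
hold automatically. (Indices are 0-based, so `e_1, y_1` of the paper are `egB ... 0`,
`ygB ... 0`.) -/
theorem statement7 (a : ℕ) (ha : 2 ≤ a) (R : Type) [CommRing R] [Algebra ℂ R] (hb : R) :
    (∀ i : Fin (a - 1), egB a R hb i * egB a R hb i = 0) ∧
    (∀ k : ℕ, 1 ≤ k →
      egB a R hb (⟨0, by omega⟩ : Fin (a - 1)) * ygB a R hb (⟨0, by omega⟩ : Fin a) ^ k *
        egB a R hb (⟨0, by omega⟩ : Fin (a - 1)) = 0) :=
  ⟨egB_mul_self a R hb, fun k _ => egB_mul_ygB_pow_mul_egB a R hb 0 (by omega) k⟩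
end

section
/- Fix an integer a ≥ 2 and work in A_ħ = A(ℂ[ħ], ħ). For every 1 ≤ k ≤ a−1, the element φ(D) commutes with s_k, where D = ∏_{1≤i<j≤a}((y_i − y_j)² − ħ²) ∈ ℂ[ħ][y_1,…,y_a]; that is, φ(D)·s_k = s_k·φ(D). -/
/-- The defining relations (VW1)-(VW9) of the affine VW superalgebra `A(R,hb)`
(all indices are 0-based translations of the 1-based indices of the paper). -/
inductive VWRel (a : ℕ) (R : Type) [CommRing R] (hb : R) :
    FreeAlgebra R (VWGen a) → FreeAlgebra R (VWGen a) → Prop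
  -- (VW1)
  | vw1 (i : Fin (a - 1)) : VWRel a R hb (Sf a R i * Sf a R i) 1
  -- (VW2)
  | vw2a (i j : Fin (a - 1)) (h : (i : ℕ) + 1 < j ∨ (j : ℕ) + 1 < i) :
      VWRel a R hb (Sf a R i * Ef a R j) (Ef a R j * Sf a R i)
  | vw2b (i j : Fin (a - 1)) (h : (i : ℕ) + 1 < j ∨ (j : ℕ) + 1 < i) :
      VWRel a R hb (Ef a R i * Ef a R j) (Ef a R j * Ef a R i)
  | vw2c (i : Fin (a - 1)) (j : Fin a) (h1 : (j : ℕ) ≠ i) (h2 : (j : ℕ) ≠ (i : ℕ) + 1) :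
      VWRel a R hb (Ef a R i * Yf a R j) (Yf a R j * Ef a R i)
  | vw2d (i j : Fin a) : VWRel a R hb (Yf a R i * Yf a R j) (Yf a R j * Yf a R i)
  -- (VW3)
  | vw3a (i j : Fin (a - 1)) (h : (i : ℕ) + 1 < j ∨ (j : ℕ) + 1 < i) :
      VWRel a R hb (Sf a R i * Sf a R j) (Sf a R j * Sf a R i)
  | vw3b (i : ℕ) (h1 : i < a - 1) (h2 : i + 1 < a - 1) :
      VWRel a R hb (Sf a R ⟨i, h1⟩ * Sf a R ⟨i + 1, h2⟩ * Sf a R ⟨i, h1⟩)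
        (Sf a R ⟨i + 1, h2⟩ * Sf a R ⟨i, h1⟩ * Sf a R ⟨i + 1, h2⟩)
  | vw3c (i : Fin (a - 1)) (j : Fin a) (h1 : (j : ℕ) ≠ i) (h2 : (j : ℕ) ≠ (i : ℕ) + 1) :
      VWRel a R hb (Sf a R i * Yf a R j) (Yf a R j * Sf a R i)
  -- (VW4)
  | vw4a (i : ℕ) (h1 : i < a - 1) (h2 : i + 1 < a - 1) :
      VWRel a R hb (Ef a R ⟨i + 1, h2⟩ * Ef a R ⟨i, h1⟩ * Ef a R ⟨i + 1, h2⟩) (-Ef a R ⟨i + 1, h2⟩)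
  | vw4b (i : ℕ) (h1 : i < a - 1) (h2 : i + 1 < a - 1) :
      VWRel a R hb (Ef a R ⟨i, h1⟩ * Ef a R ⟨i + 1, h2⟩ * Ef a R ⟨i, h1⟩) (-Ef a R ⟨i, h1⟩)
  -- (VW5)
  | vw5a (i : Fin (a - 1)) : VWRel a R hb (Ef a R i * Sf a R i) (Ef a R i)
  | vw5b (i : Fin (a - 1)) : VWRel a R hb (Sf a R i * Ef a R i) (-Ef a R i)
  | vw5c (i : ℕ) (h1 : i < a - 1) (h2 : i + 1 < a - 1) :
      VWRel a R hb (Sf a R ⟨i, h1⟩ * Ef a R ⟨i + 1, h2⟩ * Ef a R ⟨i, h1⟩)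
        (Sf a R ⟨i + 1, h2⟩ * Ef a R ⟨i, h1⟩)
  | vw5d (i : ℕ) (h1 : i < a - 1) (h2 : i + 1 < a - 1) :
      VWRel a R hb (Sf a R ⟨i + 1, h2⟩ * Ef a R ⟨i, h1⟩ * Ef a R ⟨i + 1, h2⟩)
        (-(Sf a R ⟨i, h1⟩ * Ef a R ⟨i + 1, h2⟩))
  | vw5e (i : ℕ) (h1 : i < a - 1) (h2 : i + 1 < a - 1) :
      VWRel a R hb (Ef a R ⟨i + 1, h2⟩ * Ef a R ⟨i, h1⟩ * Sf a R ⟨i + 1, h2⟩)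
        (Ef a R ⟨i + 1, h2⟩ * Sf a R ⟨i, h1⟩)
  | vw5f (i : ℕ) (h1 : i < a - 1) (h2 : i + 1 < a - 1) :
      VWRel a R hb (Ef a R ⟨i, h1⟩ * Ef a R ⟨i + 1, h2⟩ * Sf a R ⟨i, h1⟩)
        (-(Ef a R ⟨i, h1⟩ * Sf a R ⟨i + 1, h2⟩))
  -- (VW6)
  | vw6 (i : Fin (a - 1)) : VWRel a R hb (Ef a R i * Ef a R i) 0
  -- (VW7)
  | vw7a (i : ℕ) (h1 : i < a - 1) (hy : i < a) (hy2 : i + 1 < a) :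
      VWRel a R hb (Sf a R ⟨i, h1⟩ * Yf a R ⟨i, hy⟩ - Yf a R ⟨i + 1, hy2⟩ * Sf a R ⟨i, h1⟩)
        (-(Hf a R hb * Ef a R ⟨i, h1⟩) - Hf a R hb)
  | vw7b (i : ℕ) (h1 : i < a - 1) (hy : i < a) (hy2 : i + 1 < a) :
      VWRel a R hb (Yf a R ⟨i, hy⟩ * Sf a R ⟨i, h1⟩ - Sf a R ⟨i, h1⟩ * Yf a R ⟨i + 1, hy2⟩)
        (Hf a R hb * Ef a R ⟨i, h1⟩ - Hf a R hb)
  -- (VW8)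
  | vw8 (k : ℕ) (hk : 1 ≤ k) (h0 : 0 < a - 1) (h0' : 0 < a) :
      VWRel a R hb (Ef a R ⟨0, h0⟩ * Yf a R ⟨0, h0'⟩ ^ k * Ef a R ⟨0, h0⟩) 0
  -- (VW9)
  | vw9a (i : ℕ) (h1 : i < a - 1) (hy : i < a) (hy2 : i + 1 < a) :
      VWRel a R hb (Ef a R ⟨i, h1⟩ * (Yf a R ⟨i + 1, hy2⟩ - Yf a R ⟨i, hy⟩))
        (Hf a R hb * Ef a R ⟨i, h1⟩)
  | vw9b (i : ℕ) (h1 : i < a - 1) (hy : i < a) (hy2 : i + 1 < a) :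
      VWRel a R hb ((Yf a R ⟨i + 1, hy2⟩ - Yf a R ⟨i, hy⟩) * Ef a R ⟨i, h1⟩)
        (-(Hf a R hb * Ef a R ⟨i, h1⟩))

/-- The affine VW superalgebra `A(R,hb)` on `a` strands: the quotient of the free
`R`-algebra on the generators by the two-sided ideal generated by the relations. -/
noncomputable abbrev VWA (a : ℕ) (R : Type) [CommRing R] (hb : R) : Type :=
  RingQuot (VWRel a R hb)

/-- The image of the generator `s_i` in `A(R,hb)`. -/
noncomputable def sg (a : ℕ) (R : Type) [CommRing R] (hb : R) (i : Fin (a - 1)) : VWA a R hb :=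
  RingQuot.mkAlgHom R (VWRel a R hb) (Sf a R i)

/-- The image of the generator `e_i` in `A(R,hb)`. -/
noncomputable def eg (a : ℕ) (R : Type) [CommRing R] (hb : R) (i : Fin (a - 1)) : VWA a R hb :=
  RingQuot.mkAlgHom R (VWRel a R hb) (Ef a R i)

/-- The image of the generator `y_j` in `A(R,hb)`. -/
noncomputable def yg (a : ℕ) (R : Type) [CommRing R] (hb : R) (j : Fin a) : VWA a R hb :=
  RingQuot.mkAlgHom R (VWRel a R hb) (Yf a R j)

/-- The deformed squared Vandermonde polynomial `D = ∏_{i<j} ((y_i − y_j)² − hb²)`. -/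
noncomputable def Dpoly (a : ℕ) (R : Type) [CommRing R] (hb : R) : MvPolynomial (Fin a) R :=
  ∏ p ∈ Finset.univ.filter (fun p : Fin a × Fin a => p.1 < p.2),
    ((MvPolynomial.X p.1 - MvPolynomial.X p.2) ^ 2 - MvPolynomial.C (hb ^ 2))

theorem yg_comm (a : ℕ) (R : Type) [CommRing R] (hb : R) (i j : Fin a) :
    yg a R hb i * yg a R hb j = yg a R hb j * yg a R hb i := by
  have h := RingQuot.mkAlgHom_rel R (VWRel.vw2d (a := a) (R := R) (hb := hb) i j)
  simpa only [yg, map_mul] using h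

/-- The subalgebra of `A(R,ħ)` generated by the `y_j`; it is commutative. -/
noncomputable def ygAdjoin (a : ℕ) (R : Type) [CommRing R] (hb : R) : Subalgebra R (VWA a R hb) :=
  Algebra.adjoin R (Set.range (yg a R hb))

noncomputable instance (a : ℕ) (R : Type) [CommRing R] (hb : R) :
    CommRing (ygAdjoin a R hb) :=
  { (ygAdjoin a R hb).toRing with
    mul_comm := by
      have := Algebra.isMulCommutative_adjoin R (s := Set.range (yg a R hb)) (by
        rintro x ⟨i, rfl⟩ y ⟨j, rfl⟩
        exact yg_comm a R hb i j)
      exact this.is_comm.comm }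

/-- The `R`-algebra homomorphism `φ : R[y_1,…,y_a] → A(R,ħ)` sending the variable `y_j`
to the generator `y_j`. -/
noncomputable def vwphi (a : ℕ) (R : Type) [CommRing R] (hb : R) :
    MvPolynomial (Fin a) R →ₐ[R] VWA a R hb :=
  (ygAdjoin a R hb).val.comp
    (MvPolynomial.aeval (R := R)
      (fun j : Fin a =>
        (⟨yg a R hb j, Algebra.subset_adjoin ⟨j, rfl⟩⟩ : ygAdjoin a R hb)))

/-!
Write `s = s_k`, `τ` for the transposition of the strands `k` and `k + 1`, and
`F = (y_k - y_{k+1})² - ħ²` for the factor of `D` belonging to that pair. By (VW7) `s`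
anticommutes with `y_k - y_{k+1}` up to the central `-2ħ`, so it commutes with `F`; by (VW9)
`F e_k = 0`. Induction on polynomials gives `s φ(f) = φ(τ f) s + ħ φ(∂ f) + c` with `F c = 0`,
`∂` the divided difference. The product `G` of the remaining factors of `D` is `τ`-invariant, since `τ` preserves
the order of every other pair, so `∂ G = 0` and `s φ(D) = F s φ(G) = F (φ(G) s + c) = φ(D) s`.
-/

theorem commute_sq_of_mul_add_mul_eq {A : Type*} [Ring A] {s w c : A} (hc : Commute w c)
    (h : s * w + w * s = c) : Commute s (w ^ 2) := by
  rw [← eq_sub_iff_add_eq] at h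
  calc s * w ^ 2 = (s * w) * w := by rw [sq, mul_assoc]
    _ = (c - w * s) * w := by rw [h]
    _ = c * w - w * (s * w) := by noncomm_ring
    _ = c * w - w * (c - w * s) := by rw [h]
    _ = w ^ 2 * s + (c * w - w * c) := by noncomm_ring
    _ = w ^ 2 * s := by rw [hc.eq, sub_self, add_zero]

theorem sub_algebraMap_sq_mul_eq_zero {R A : Type*} [CommRing R] [Ring A] [Algebra R A]
    {w e : A} {r : R}
    (h : w * e = r • e) : (w ^ 2 - algebraMap R A (r ^ 2)) * e = 0 := by
  rw [sub_mul, sq, mul_assoc, h, mul_smul_comm, h, smul_smul, ← sq, ← Algebra.smul_def,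
    sub_self]

namespace VWA

open MvPolynomial

variable {a : ℕ} {R : Type} [CommRing R] {hb : R}

theorem vwphi_X (j : Fin a) : vwphi a R hb (X j) = yg a R hb j := by
  simp [vwphi]

theorem commute_vwphi (p q : MvPolynomial (Fin a) R) :
    Commute (vwphi a R hb p) (vwphi a R hb q) := by
  rw [Commute, SemiconjBy, ← map_mul, ← map_mul, mul_comm]

noncomputable def pairFactor (hb : R) (i j : Fin a) : MvPolynomial (Fin a) R :=
  (X i - X j) ^ 2 - C (hb ^ 2)

theorem vwphi_pairFactor (i j : Fin a) :
    vwphi a R hb (pairFactor hb i j) =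
      (yg a R hb i - yg a R hb j) ^ 2 - algebraMap R (VWA a R hb) (hb ^ 2) := by
  rw [pairFactor, map_sub, map_pow, map_sub, vwphi_X, vwphi_X, ← algebraMap_eq, AlgHom.commutes]

section Relations

theorem mkAlgHom_Sf (i : Fin (a - 1)) :
    RingQuot.mkAlgHom R (VWRel a R hb) (Sf a R i) = sg a R hb i := rfl

theorem mkAlgHom_Ef (i : Fin (a - 1)) :
    RingQuot.mkAlgHom R (VWRel a R hb) (Ef a R i) = eg a R hb i := rfl

theorem mkAlgHom_Yf (j : Fin a) :
    RingQuot.mkAlgHom R (VWRel a R hb) (Yf a R j) = yg a R hb j := rfl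

theorem mkAlgHom_Hf :
    RingQuot.mkAlgHom R (VWRel a R hb) (Hf a R hb) = algebraMap R (VWA a R hb) hb :=
  AlgHom.commutes _ _

variable {k : ℕ} (hk : k < a - 1)

abbrev leftStrand : Fin a := ⟨k, by omega⟩

abbrev rightStrand : Fin a := ⟨k + 1, by omega⟩

theorem sg_mul_yg_leftStrand :
    sg a R hb ⟨k, hk⟩ * yg a R hb (leftStrand hk) =
      yg a R hb (rightStrand hk) * sg a R hb ⟨k, hk⟩ - hb • (eg a R hb ⟨k, hk⟩ + 1) := by
  have h := RingQuot.mkAlgHom_rel R (VWRel.vw7a (hb := hb) k hk (by omega) (by omega))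
  simp only [map_sub, map_mul, map_neg, mkAlgHom_Sf, mkAlgHom_Yf, mkAlgHom_Ef, mkAlgHom_Hf] at h
  rw [← sub_add_cancel (_ * _) (yg a R hb (rightStrand hk) * _), h, Algebra.smul_def]
  noncomm_ring

theorem sg_mul_yg_rightStrand :
    sg a R hb ⟨k, hk⟩ * yg a R hb (rightStrand hk) =
      yg a R hb (leftStrand hk) * sg a R hb ⟨k, hk⟩ - hb • (eg a R hb ⟨k, hk⟩ - 1) := by
  have h := RingQuot.mkAlgHom_rel R (VWRel.vw7b (hb := hb) k hk (by omega) (by omega))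
  simp only [map_sub, map_mul, mkAlgHom_Sf, mkAlgHom_Yf, mkAlgHom_Ef, mkAlgHom_Hf] at h
  rw [← sub_sub_cancel (yg a R hb (leftStrand hk) * _) (_ * _)]
  rw [h, Algebra.smul_def, mul_sub, mul_one]

theorem sg_mul_yg_of_ne {j : Fin a} (hl : j ≠ leftStrand hk) (hr : j ≠ rightStrand hk) :
    sg a R hb ⟨k, hk⟩ * yg a R hb j = yg a R hb j * sg a R hb ⟨k, hk⟩ := by
  have h := RingQuot.mkAlgHom_rel R (VWRel.vw3c (hb := hb) ⟨k, hk⟩ j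
    (fun h => hl (Fin.ext h)) (fun h => hr (Fin.ext h)))
  simpa only [map_mul, mkAlgHom_Sf, mkAlgHom_Yf] using h

theorem yg_sub_yg_mul_eg :
    (yg a R hb (leftStrand hk) - yg a R hb (rightStrand hk)) * eg a R hb ⟨k, hk⟩ =
      hb • eg a R hb ⟨k, hk⟩ := by
  have h := RingQuot.mkAlgHom_rel R (VWRel.vw9b (hb := hb) k hk (by omega) (by omega))
  simp only [map_sub, map_mul, map_neg, mkAlgHom_Ef, mkAlgHom_Yf, mkAlgHom_Hf] at h
  rw [← neg_eq_iff_eq_neg, ← neg_mul, neg_sub] at h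
  rw [Algebra.smul_def, ← h]

end Relations

section Exchange

variable (hb) {k : ℕ} (hk : k < a - 1)

abbrev strandSwap : Equiv.Perm (Fin a) := Equiv.swap (leftStrand hk) (rightStrand hk)

theorem commute_sg_vwphi_pairFactor :
    Commute (sg a R hb ⟨k, hk⟩)
      (vwphi a R hb (pairFactor hb (leftStrand hk) (rightStrand hk))) := by
  rw [vwphi_pairFactor]
  refine Commute.sub_right (commute_sq_of_mul_add_mul_eq
    (Algebra.commute_algebraMap_right (-(2 * hb)) _) ?_) (Algebra.commute_algebraMap_right _ _)
  rw [mul_sub, sub_mul, sg_mul_yg_leftStrand, sg_mul_yg_rightStrand,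
    Algebra.algebraMap_eq_smul_one]
  module

theorem vwphi_pairFactor_mul_eg :
    vwphi a R hb (pairFactor hb (leftStrand hk) (rightStrand hk)) * eg a R hb ⟨k, hk⟩ = 0 := by
  rw [vwphi_pairFactor]
  exact sub_algebraMap_sq_mul_eq_zero (yg_sub_yg_mul_eg hk)

/-- `s φ(f) = φ(τ f) s + c + ħ φ(∂ f)`, with `∂ f = (τ f - f) / (y_k - y_{k+1})` the divided
difference and `c` in the right annihilator of `F = (y_k - y_{k+1})² - ħ²`; such `c` collect the
`e_k`-terms of (VW7). -/
def ExchangeRel (f : MvPolynomial (Fin a) R) : Prop :=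
  ∃ (c : VWA a R hb) (g : MvPolynomial (Fin a) R),
    vwphi a R hb (pairFactor hb (leftStrand hk) (rightStrand hk)) * c = 0 ∧
    rename (strandSwap hk) f - f = (X (leftStrand hk) - X (rightStrand hk)) * g ∧
    sg a R hb ⟨k, hk⟩ * vwphi a R hb f =
      vwphi a R hb (rename (strandSwap hk) f) * sg a R hb ⟨k, hk⟩ + c + hb • vwphi a R hb g

theorem exchangeRel_C (r : R) : ExchangeRel hb hk (C r) := by
  refine ⟨0, 0, mul_zero _, by rw [rename_C, sub_self, mul_zero], ?_⟩
  rw [rename_C, ← algebraMap_eq, AlgHom.commutes, map_zero, smul_zero, add_zero, add_zero]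
  exact (Algebra.commutes r _).symm

theorem exchangeRel_add {f f' : MvPolynomial (Fin a) R} (hf : ExchangeRel hb hk f)
    (hf' : ExchangeRel hb hk f') : ExchangeRel hb hk (f + f') := by
  obtain ⟨c, g, hc, hg, hs⟩ := hf
  obtain ⟨c', g', hc', hg', hs'⟩ := hf'
  refine ⟨c + c', g + g', by rw [mul_add, hc, hc', add_zero], ?_, ?_⟩
  · rw [map_add, add_sub_add_comm, hg, hg', mul_add]
  · rw [map_add, map_add, map_add, mul_add, hs, hs', add_mul, map_add, smul_add]
    abel

theorem exchangeRel_mul {f f' : MvPolynomial (Fin a) R} (hf : ExchangeRel hb hk f)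
    (hf' : ExchangeRel hb hk f') : ExchangeRel hb hk (f * f') := by
  obtain ⟨c, g, hc, hg, hs⟩ := hf
  obtain ⟨c', g', hc', hg', hs'⟩ := hf'
  set τ := strandSwap hk
  refine ⟨vwphi a R hb (rename τ f) * c' + c * vwphi a R hb f', rename τ f * g' + g * f',
    ?_, ?_, ?_⟩
  · rw [mul_add, ← mul_assoc, (commute_vwphi _ _).eq, mul_assoc, hc', ← mul_assoc, hc,
      mul_zero, zero_mul, add_zero]
  · calc rename τ (f * f') - f * f'
        = rename τ f * (rename τ f' - f') + (rename τ f - f) * f' := by rw [map_mul]; ring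
      _ = _ := by rw [hg, hg']; ring
  · calc sg a R hb ⟨k, hk⟩ * vwphi a R hb (f * f')
        = (sg a R hb ⟨k, hk⟩ * vwphi a R hb f) * vwphi a R hb f' := by rw [map_mul, mul_assoc]
      _ = _ := by
        rw [hs, add_mul, add_mul, mul_assoc, hs', smul_mul_assoc]
        simp only [map_mul, map_add, mul_add, smul_add, mul_smul_comm, mul_assoc]
        abel

theorem exchangeRel_X (j : Fin a) : ExchangeRel hb hk (X j) := by
  by_cases hl : j = leftStrand hk
  · subst hl
    refine ⟨(-hb) • eg a R hb ⟨k, hk⟩, -1, ?_, ?_, ?_⟩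
    · rw [mul_smul_comm, vwphi_pairFactor_mul_eg, smul_zero]
    · rw [rename_X, Equiv.swap_apply_left]; ring
    · rw [rename_X, Equiv.swap_apply_left, vwphi_X, vwphi_X, sg_mul_yg_leftStrand, map_neg,
        map_one]
      module
  by_cases hr : j = rightStrand hk
  · subst hr
    refine ⟨(-hb) • eg a R hb ⟨k, hk⟩, 1, ?_, ?_, ?_⟩
    · rw [mul_smul_comm, vwphi_pairFactor_mul_eg, smul_zero]
    · rw [rename_X, Equiv.swap_apply_right]; ring
    · rw [rename_X, Equiv.swap_apply_right, vwphi_X, vwphi_X, sg_mul_yg_rightStrand, map_one]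
      module
  refine ⟨0, 0, mul_zero _, ?_, ?_⟩
  · rw [rename_X, Equiv.swap_apply_of_ne_of_ne hl hr, sub_self, mul_zero]
  · rw [rename_X, Equiv.swap_apply_of_ne_of_ne hl hr, vwphi_X, sg_mul_yg_of_ne hk hl hr,
      map_zero, smul_zero, add_zero, add_zero]

theorem exchangeRel (f : MvPolynomial (Fin a) R) : ExchangeRel hb hk f := by
  induction f using MvPolynomial.induction_on with
  | C r => exact exchangeRel_C hb hk r
  | add p q hp hq => exact exchangeRel_add hb hk hp hq
  | mul_X p j hp => exact exchangeRel_mul hb hk hp (exchangeRel_X hb hk j)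

theorem sg_mul_vwphi_of_rename_eq [IsDomain R] {f : MvPolynomial (Fin a) R}
    (hf : rename (strandSwap hk) f = f) :
    ∃ c : VWA a R hb, vwphi a R hb (pairFactor hb (leftStrand hk) (rightStrand hk)) * c = 0 ∧
      sg a R hb ⟨k, hk⟩ * vwphi a R hb f = vwphi a R hb f * sg a R hb ⟨k, hk⟩ + c := by
  obtain ⟨c, g, hc, hg, hs⟩ := exchangeRel hb hk f
  have hX : (X (leftStrand hk) - X (rightStrand hk) : MvPolynomial (Fin a) R) ≠ 0 :=
    sub_ne_zero.mpr fun h => by simpa using X_injective h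
  have hg0 : g = 0 := by
    rw [hf, sub_self, eq_comm, mul_eq_zero] at hg
    exact hg.resolve_left hX
  refine ⟨c, hc, ?_⟩
  rwa [hg0, map_zero, smul_zero, add_zero, hf] at hs

end Exchange

section Discriminant

variable {k : ℕ} (hk : k < a - 1)

theorem leftStrand_lt_rightStrand : leftStrand hk < rightStrand hk :=
  Fin.lt_def.mpr (Nat.lt_succ_self k)

theorem strandSwap_lt_strandSwap {i j : Fin a} (hij : i < j)
    (hne : (i, j) ≠ (leftStrand hk, rightStrand hk)) : strandSwap hk i < strandSwap hk j := by
  simp only [ne_eq, Prod.mk.injEq, Fin.ext_iff] at hne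
  rw [Fin.lt_def] at hij
  simp only [Equiv.swap_apply_def, Fin.ext_iff]
  split_ifs <;> simp only [Fin.lt_def] <;> omega

def offPairs : Finset (Fin a × Fin a) :=
  (Finset.univ.filter fun p : Fin a × Fin a => p.1 < p.2).erase (leftStrand hk, rightStrand hk)

theorem rename_strandSwap_prod_offPairs :
    rename (strandSwap hk) (∏ p ∈ offPairs hk, pairFactor hb p.1 p.2) =
      ∏ p ∈ offPairs hk, pairFactor hb p.1 p.2 := by
  have hmem {p : Fin a × Fin a} (hp : p ∈ offPairs hk) :
      (strandSwap hk p.1, strandSwap hk p.2) ∈ offPairs hk := by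
    simp only [offPairs, Finset.mem_erase, Finset.mem_filter, Finset.mem_univ, true_and] at hp ⊢
    refine ⟨?_, strandSwap_lt_strandSwap hk hp.2 hp.1⟩
    simp only [ne_eq, Prod.mk.injEq, Equiv.swap_apply_eq_iff, Equiv.swap_apply_left,
      Equiv.swap_apply_right]
    rintro ⟨h1, h2⟩
    exact (leftStrand_lt_rightStrand hk).not_gt (h1 ▸ h2 ▸ hp.2)
  rw [map_prod]
  refine Finset.prod_nbij' (fun p => (strandSwap hk p.1, strandSwap hk p.2))
    (fun p => (strandSwap hk p.1, strandSwap hk p.2)) (fun p hp => hmem hp) (fun p hp => hmem hp)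
    (fun p _ => by simp) (fun p _ => by simp) (fun p _ => ?_)
  simp only [pairFactor, map_sub, map_pow, rename_X, rename_C]

theorem Dpoly_eq_pairFactor_mul_prod_offPairs :
    Dpoly a R hb = pairFactor hb (leftStrand hk) (rightStrand hk) *
      ∏ p ∈ offPairs hk, pairFactor hb p.1 p.2 := by
  have hmem : (leftStrand hk, rightStrand hk) ∈
      Finset.univ.filter fun p : Fin a × Fin a => p.1 < p.2 :=
    Finset.mem_filter.mpr ⟨Finset.mem_univ _, leftStrand_lt_rightStrand hk⟩
  rw [Dpoly, ← Finset.mul_prod_erase _ _ hmem]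
  rfl

theorem vwphi_Dpoly_mul_sg [IsDomain R] :
    vwphi a R hb (Dpoly a R hb) * sg a R hb ⟨k, hk⟩ =
      sg a R hb ⟨k, hk⟩ * vwphi a R hb (Dpoly a R hb) := by
  obtain ⟨c, hc, hs⟩ := sg_mul_vwphi_of_rename_eq hb hk (rename_strandSwap_prod_offPairs hk)
  rw [Dpoly_eq_pairFactor_mul_prod_offPairs hk, map_mul, mul_assoc, ← mul_assoc (sg a R hb _),
    (commute_sg_vwphi_pairFactor hb hk).eq, mul_assoc, hs, mul_add, hc, add_zero]

end Discriminant

end VWA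

theorem statement11_general (a : ℕ) (k : ℕ) (hk : k < a - 1) :
    vwphi a (Polynomial ℂ) Polynomial.X (Dpoly a (Polynomial ℂ) Polynomial.X) * sg a (Polynomial ℂ) Polynomial.X ⟨k, hk⟩ =
      sg a (Polynomial ℂ) Polynomial.X ⟨k, hk⟩ * vwphi a (Polynomial ℂ) Polynomial.X (Dpoly a (Polynomial ℂ) Polynomial.X) :=
  VWA.vwphi_Dpoly_mul_sg hk

/-- in `A_ħ`, `φ(D)` commutes with every `s_k`, where
`D = ∏_{i<j}((y_i − y_j)² − ħ²)`. (Indices are 0-based.) -/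
theorem statement11 (a : ℕ) (ha : 2 ≤ a) (k : ℕ) (hk : k < a - 1) :
    vwphi a (Polynomial ℂ) Polynomial.X (Dpoly a (Polynomial ℂ) Polynomial.X) * sg a (Polynomial ℂ) Polynomial.X ⟨k, hk⟩ =
      sg a (Polynomial ℂ) Polynomial.X ⟨k, hk⟩ * vwphi a (Polynomial ℂ) Polynomial.X (Dpoly a (Polynomial ℂ) Polynomial.X) :=
  statement11_general a k hk
end

section
/- Let B be an associative unital ℂ-algebra with an algebra filtration F. Then the centre of the Rees algebra Rees(B, F) equals the Rees algebra of the centre with the induced filtration; concretely, an element p of Rees(B, F) ⊆ B[X] is central in Rees(B, F) if and only if for every k ∈ ℕ the coefficient of X^k in p lies in F k ∩ Z(B), where Z(B) is the centre of B. -/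
/-!
Since the filtration is exhaustive, every `b : B` occurs as the coefficient of a monomial
`b X^n` in the Rees algebra; comparing the coefficients of `X^(k + n)` in `p * b X^n` and
`b X^n * p` shows that each coefficient of a central `p` commutes with `b`. Conversely, a
polynomial with central coefficients is central in all of `B[X]`.
-/

/-- Membership in the Rees algebra of a filtered algebra `(B, F)`, realized inside the
polynomial ring `B[X]`: a polynomial `p` belongs to `Rees(B, F)` iff for every `k` the
coefficient of `X^k` in `p` lies in `F k`. -/
def InRees {B : Type} [Ring B] [Algebra ℂ B] (F : ℕ → Submodule ℂ B)
    (p : Polynomial B) : Prop :=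
  ∀ k : ℕ, p.coeff k ∈ F k

open Polynomial

namespace Polynomial

variable {R : Type*} [Semiring R]

theorem commute_of_forall_coeff_mem_center {p : R[X]} (hp : ∀ k, p.coeff k ∈ Set.center R)
    (q : R[X]) : Commute p q := by
  ext n
  rw [coeff_mul, ← Finset.Nat.sum_antidiagonal_swap, coeff_mul]
  exact Finset.sum_congr rfl fun x _ => ((hp x.2).comm (q.coeff x.1)).eq

theorem coeff_commute_of_commute_monomial {p : R[X]} {n : ℕ} {b : R}
    (h : Commute p (monomial n b)) (k : ℕ) : Commute (p.coeff k) b := by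
  show _ = _
  simpa only [coeff_mul_monomial, coeff_monomial_mul] using congrArg (coeff · (k + n)) h.eq

end Polynomial

theorem inRees_monomial {B : Type} [Ring B] [Algebra ℂ B] {F : ℕ → Submodule ℂ B} {n : ℕ}
    {b : B} (hb : b ∈ F n) : InRees F (monomial n b) := by
  intro m
  rw [coeff_monomial]
  split_ifs with h
  · exact h ▸ hb
  · exact (F m).zero_mem

theorem statement17_general (B : Type) [Ring B] [Algebra ℂ B] (F : ℕ → Submodule ℂ B)
    (hexh : ∀ b : B, ∃ k, b ∈ F k)
    (p : Polynomial B) (hp : InRees F p) :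
    (∀ q : Polynomial B, InRees F q → p * q = q * p) ↔
      ∀ k : ℕ, p.coeff k ∈ F k ∧ p.coeff k ∈ Set.center B := by
  refine ⟨fun h k => ⟨hp k, Semigroup.mem_center_iff.mpr fun b => ?_⟩,
    fun h q _ => commute_of_forall_coeff_mem_center (fun k => (h k).2) q⟩
  obtain ⟨n, hb⟩ := hexh b
  exact (coeff_commute_of_commute_monomial (h _ (inRees_monomial hb)) k).eq.symm

/-- for a filtered `ℂ`-algebra `(B, F)`, the centre of the Rees algebra
`Rees(B, F)` is the Rees algebra of the centre with the induced filtration: an element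
`p ∈ Rees(B, F) ⊆ B[X]` is central in `Rees(B, F)` iff each coefficient `p.coeff k`
lies in `F k ∩ Z(B)`. -/
theorem statement17 (B : Type) [Ring B] [Algebra ℂ B] (F : ℕ → Submodule ℂ B)
    (hone : (1 : B) ∈ F 0)
    (hmono : ∀ k : ℕ, F k ≤ F (k + 1))
    (hmul : ∀ i j : ℕ, ∀ x ∈ F i, ∀ y ∈ F j, x * y ∈ F (i + j))
    (hexh : ∀ b : B, ∃ k, b ∈ F k)
    (p : Polynomial B) (hp : InRees F p) :
    (∀ q : Polynomial B, InRees F q → p * q = q * p) ↔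
      ∀ k : ℕ, p.coeff k ∈ F k ∧ p.coeff k ∈ Set.center B :=
  statement17_general B F hexh p hp
end

section
/- Let B be an associative unital ℂ-algebra with an algebra filtration F. Suppose b : ι → B and d : ι → ℕ are such that for every k ∈ ℕ the family (b i)_{i : d i ≤ k} is a ℂ-basis of the subspace F k (a basis of B compatible with the filtration). Then the family (b i · X^{d i})_{i ∈ ι} is a basis of Rees(B, F) as a module over the polynomial ring ℂ[X]. -/
/-!
Each `p` in the Rees module is `∑ₖ C (p.coeff k) * X ^ k` with `p.coeff k ∈ F k`, and expanding
`p.coeff k` in the basis `(b i)_{d i ≤ k}` shows it is a `ℂ[X]`-combination of the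
`C (b i) * X ^ d i`, because `C (b i) * X ^ k = X ^ (k - d i) • (C (b i) * X ^ d i)`. Conversely,
the coefficient of `X ^ k` in `∑ gᵢ • (C (b i) * X ^ d i)` is `∑_{d i ≤ k} (gᵢ).coeff (k - d i) • b i`,
so linear independence of `b` over `ℂ` forces every coefficient of every `gᵢ` to vanish.
-/

/-- The polynomial ring `B[X]` is an algebra (hence a module) over `ℂ[X]`, via
coefficientwise application of `algebraMap ℂ B`. -/
noncomputable instance polyPolyAlgebra (B : Type) [Ring B] [Algebra ℂ B] :
    Algebra (Polynomial ℂ) (Polynomial B) :=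
  RingHom.toAlgebra' (Polynomial.mapRingHom (algebraMap ℂ B)) (by
    intro c x
    induction c using Polynomial.induction_on' with
    | add p q hp hq => simp only [map_add, add_mul, mul_add, hp, hq]
    | monomial k r =>
        have hc : ∀ y : Polynomial B,
            Polynomial.C (algebraMap ℂ B r) * y = y * Polynomial.C (algebraMap ℂ B r) := by
          intro y
          ext m
          simp only [Polynomial.coeff_C_mul, Polynomial.coeff_mul_C]
          exact Algebra.commutes r (y.coeff m)
        rw [Polynomial.coe_mapRingHom, Polynomial.map_monomial,
          ← Polynomial.C_mul_X_pow_eq_monomial, mul_assoc, Polynomial.X_pow_mul,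
          ← mul_assoc, hc x, mul_assoc])

open Polynomial

section Filtration

variable {R M ι : Type*} [Semiring R] [AddCommMonoid M] [Module R M] (b : ι → M) (d : ι → ℕ)

theorem linearIndependent_of_forall_linearIndepOn_setOf_le
    (h : ∀ k, LinearIndepOn R b {i | d i ≤ k}) : LinearIndependent R b := by
  have hcover : ⋃ k, {i | d i ≤ k} = Set.univ :=
    Set.eq_univ_of_forall fun i => Set.mem_iUnion.2 ⟨d i, le_refl (d i)⟩
  rw [← linearIndepOn_univ_iff, ← hcover]
  exact linearIndepOn_iUnion_of_directed
    (Monotone.directed_le fun _ _ hjk _ hi => le_trans hi hjk) h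

variable (R) in
def spanFiltration (k : ℕ) : Submodule R M := Submodule.span R (b '' {i | d i ≤ k})

theorem spanFiltration_mono : Monotone (spanFiltration R b d) := fun _ _ hjk =>
  Submodule.span_mono (Set.image_mono fun _ hi => le_trans hi hjk)

end Filtration

section Rees

variable {B : Type} [Ring B] [Algebra ℂ B]

theorem Polynomial.smul_eq_map_algebraMap_mul (c : ℂ[X]) (p : B[X]) :
    c • p = c.map (algebraMap ℂ B) * p := rfl

open Finset in
theorem Polynomial.coeff_smul_eq_sum_antidiagonal (c : ℂ[X]) (p : B[X]) (k : ℕ) :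
    (c • p).coeff k = ∑ x ∈ antidiagonal k, c.coeff x.1 • p.coeff x.2 := by
  rw [smul_eq_map_algebraMap_mul, coeff_mul]
  simp only [coeff_map, Algebra.smul_def]

theorem Polynomial.coeff_smul_C_mul_X_pow (c : ℂ[X]) (a : B) (n k : ℕ) :
    (c • (C a * X ^ n)).coeff k = if n ≤ k then c.coeff (k - n) • a else 0 := by
  rw [smul_eq_map_algebraMap_mul, ← mul_assoc, coeff_mul_X_pow']
  split_ifs
  · rw [coeff_mul_C, coeff_map, Algebra.smul_def]
  · rfl

theorem Polynomial.X_pow_smul_C_mul_X_pow (a : B) (m n : ℕ) :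
    (X ^ m : ℂ[X]) • (C a * X ^ n) = C a * X ^ (m + n) := by
  rw [smul_eq_map_algebraMap_mul, Polynomial.map_pow, map_X, ← mul_assoc,
    (commute_X_pow _ _).eq, mul_assoc, ← pow_add]

theorem Polynomial.C_smul_C_mul_X_pow (α : ℂ) (a : B) (n : ℕ) :
    (C α : ℂ[X]) • (C a * X ^ n) = C (α • a) * X ^ n := by
  rw [smul_eq_map_algebraMap_mul, map_C, ← mul_assoc, ← C_mul, ← Algebra.smul_def]

def reesSubmodule (F : ℕ → Submodule ℂ B) (hF : Monotone F) : Submodule ℂ[X] B[X] where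
  carrier := {p | ∀ k, p.coeff k ∈ F k}
  zero_mem' k := by simp
  add_mem' hp hq k := by simpa using (F k).add_mem (hp k) (hq k)
  smul_mem' c p hp k := by
    rw [Polynomial.coeff_smul_eq_sum_antidiagonal]
    exact Submodule.sum_mem _ fun x hx =>
      hF (Finset.HasAntidiagonal.antidiagonal.snd_le hx) ((F x.2).smul_mem _ (hp x.2))

theorem C_mul_X_pow_mem_reesSubmodule {F : ℕ → Submodule ℂ B} (hF : Monotone F) {a : B} {n : ℕ}
    (ha : a ∈ F n) : C a * X ^ n ∈ reesSubmodule F hF := by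
  intro k
  rw [C_mul_X_pow_eq_monomial, coeff_monomial]
  split_ifs with h
  · exact h ▸ ha
  · exact (F k).zero_mem

variable {ι : Type*} (b : ι → B) (d : ι → ℕ)

theorem linearIndependent_C_mul_X_pow (hb : LinearIndependent ℂ b) :
    LinearIndependent ℂ[X] fun i => C (b i) * X ^ d i := by
  rw [linearIndependent_iff']
  intro s g hsum i₀ hi₀
  ext m
  have hcoeff : ∑ i ∈ s,
      (if d i ≤ m + d i₀ then (g i).coeff (m + d i₀ - d i) else 0) • b i = 0 := by
    simpa only [finsetSum_coeff, coeff_smul_C_mul_X_pow, ite_smul, zero_smul, coeff_zero]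
      using congrArg (coeff · (m + d i₀)) hsum
  simpa using linearIndependent_iff'.1 hb s _ hcoeff i₀ hi₀

theorem C_mul_X_pow_mem_span_C_mul_X_pow {a : B} {k : ℕ} (ha : a ∈ spanFiltration ℂ b d k) :
    C a * X ^ k ∈ Submodule.span ℂ[X] (Set.range fun i => C (b i) * X ^ d i) := by
  induction ha using Submodule.span_induction with
  | mem _ hx =>
    obtain ⟨i, hi, rfl⟩ := hx
    rw [← Nat.sub_add_cancel hi, ← X_pow_smul_C_mul_X_pow]
    exact Submodule.smul_mem _ _ (Submodule.subset_span ⟨i, rfl⟩)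
  | zero => simp
  | add x y _ _ hx hy =>
    rw [map_add, add_mul]
    exact add_mem hx hy
  | smul α x _ hx =>
    rw [← C_smul_C_mul_X_pow]
    exact Submodule.smul_mem _ _ hx

theorem span_C_mul_X_pow_eq_reesSubmodule :
    Submodule.span ℂ[X] (Set.range fun i => C (b i) * X ^ d i) =
      reesSubmodule (spanFiltration ℂ b d) (spanFiltration_mono b d) := by
  apply le_antisymm
  · rw [Submodule.span_le]
    rintro _ ⟨i, rfl⟩
    exact C_mul_X_pow_mem_reesSubmodule _ (Submodule.subset_span ⟨i, le_refl (d i), rfl⟩)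
  · intro p hp
    rw [← p.sum_C_mul_X_pow_eq, Polynomial.sum_def]
    exact Submodule.sum_mem _ fun k _ => C_mul_X_pow_mem_span_C_mul_X_pow b d (hp k)

end Rees

theorem statement18_general (B : Type) [Ring B] [Algebra ℂ B] (F : ℕ → Submodule ℂ B)
    (ι : Type) (b : ι → B) (d : ι → ℕ)
    (hindep : ∀ k : ℕ, LinearIndependent ℂ (fun i : {i : ι // d i ≤ k} => b i.1))
    (hspan : ∀ k : ℕ, Submodule.span ℂ (b '' {i : ι | d i ≤ k}) = F k) :
    LinearIndependent (Polynomial ℂ)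
        (fun i : ι => Polynomial.C (b i) * Polynomial.X ^ d i) ∧
      (Submodule.span (Polynomial ℂ)
          (Set.range (fun i : ι => Polynomial.C (b i) * Polynomial.X ^ d i)) :
          Set (Polynomial B)) =
        {p : Polynomial B | ∀ k : ℕ, p.coeff k ∈ F k} := by
  obtain rfl : spanFiltration ℂ b d = F := funext hspan
  exact ⟨linearIndependent_C_mul_X_pow b d
      (linearIndependent_of_forall_linearIndepOn_setOf_le b d hindep),
    congrArg SetLike.coe (span_C_mul_X_pow_eq_reesSubmodule b d)⟩

/-- if `(B, F)` is a filtered `ℂ`-algebra and `(b i)_{i : ι}` (with degrees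
`d i`) is a basis of `B` compatible with the filtration (i.e. for every `k` the family
`(b i)_{d i ≤ k}` is a `ℂ`-basis of `F k`), then the family `(b i · X^{d i})_{i : ι}` is a
basis of the Rees algebra `Rees(B, F) = {p ∈ B[X] | ∀ k, p.coeff k ∈ F k}` as a module
over `ℂ[X]`. -/
theorem statement18 (B : Type) [Ring B] [Algebra ℂ B] (F : ℕ → Submodule ℂ B)
    (hone : (1 : B) ∈ F 0)
    (hmono : ∀ k : ℕ, F k ≤ F (k + 1))
    (hmul : ∀ i j : ℕ, ∀ x ∈ F i, ∀ y ∈ F j, x * y ∈ F (i + j))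
    (hexh : ∀ x : B, ∃ k, x ∈ F k)
    (ι : Type) (b : ι → B) (d : ι → ℕ)
    (hindep : ∀ k : ℕ, LinearIndependent ℂ (fun i : {i : ι // d i ≤ k} => b i.1))
    (hspan : ∀ k : ℕ, Submodule.span ℂ (b '' {i : ι | d i ≤ k}) = F k) :
    LinearIndependent (Polynomial ℂ)
        (fun i : ι => Polynomial.C (b i) * Polynomial.X ^ d i) ∧
      (Submodule.span (Polynomial ℂ)
          (Set.range (fun i : ι => Polynomial.C (b i) * Polynomial.X ^ d i)) :
          Set (Polynomial B)) =
        {p : Polynomial B | ∀ k : ℕ, p.coeff k ∈ F k} :=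
  statement18_general B F ι b d hindep hspan
end
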